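/- Let 0 ≤ ν ≤ 1, 0 < μ < 1, λ > 0, T > 0, and define v(t) := (T−t)^{−ν(1−μ)} E_{μ,1−ν(1−μ)}(−λ (T−t)^μ) for 0 < t < T. Then: (i) I_{t,T}^{ν(1−μ)} v(t) = E_{μ,1}(−λ (T−t)^μ) for 0 ≤ t < T, so lim_{t→T⁻} I_{t,T}^{ν(1−μ)} v(t) = 1; and (ii) the right Hilfer fractional derivative of order (μ, 1−ν) satisfies D_{t,T}^{μ,1−ν} v(t) = −λ v(t) for every 0 < t < T. -/

import Mathlib

/-- The right Riemann-Liouville fractional integral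
`(I_{t,T}^α u)(t) = (1/Γ(α)) ∫ₜᵀ (τ-t)^(α-1) u(τ) dτ`, with `I_{t,T}^0 u = u`. -/
noncomputable def rlIR (a T : ℝ) (u : ℝ → ℝ) (t : ℝ) : ℝ :=
  if a = 0 then u t
  else (Real.Gamma a)⁻¹ * ∫ τ in t..T, (τ - t) ^ (a - 1) * u τ

/-- The right Hilfer fractional derivative of order `(μ,ν')`:
`(D_{t,T}^{μ,ν'} u)(t) = -I_{t,T}^{ν'(1-μ)}[(d/dt)(I_{t,T}^{(1-ν')(1-μ)} u)](t)`. -/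
noncomputable def hilferDR (μ ν' T : ℝ) (u : ℝ → ℝ) (t : ℝ) : ℝ :=
  -(rlIR (ν' * (1 - μ)) T (deriv (rlIR ((1 - ν') * (1 - μ)) T u)) t)

/-- The (real) Mittag-Leffler function `E_{α,β}(x) = ∑_{n=0}^∞ xⁿ/Γ(αn+β)`. -/
noncomputable def mlE (a b x : ℝ) : ℝ :=
  ∑' n : ℕ, x ^ n / Real.Gamma (a * n + b)

/-!
Write `K_β(s) = (T - s)^(β-1) E_{μ,β}(c (T - s)^μ)`. Integrating the Mittag-Leffler series term
by term against `(τ - t)^(a-1)`, every term is a Beta integral whose Gamma factors cancel those of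
the series, so that `I^a K_β = K_{a+β}`. With `β = 1 - ν(1-μ)` this is (i), because
`K_1(t) = E_{μ,1}(c (T - t)^μ)` is continuous with value `1` at `T`. For (ii), the recurrence
`E_{μ,1}(x) = 1 + x E_{μ,1+μ}(x)` and `I^1 K_μ = K_{1+μ}` give `K_1(s) = 1 + c ∫ₛᵀ K_μ`, hence
`K_1' = -c K_μ`, and applying `I^{(1-ν)(1-μ)}` to this returns `-c K_β`.
-/

open MeasureTheory Set Filter Topology

namespace Real

lemma Gamma_add_one_le_Gamma_add_mul_rpow {x s : ℝ} (hx : 0 < x) (hs0 : 0 < s) (hs1 : s < 1) :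
    Gamma (x + 1) ≤ Gamma (x + s) * (x + s) ^ (1 - s) := by
  have hxs : 0 < x + s := by linarith
  have h := Gamma_mul_add_mul_le_rpow_Gamma_mul_rpow_Gamma hxs (by linarith : 0 < x + s + 1)
    hs0 (sub_pos.2 hs1) (add_sub_cancel s 1)
  rw [show s * (x + s) + (1 - s) * (x + s + 1) = x + 1 by ring, Gamma_add_one hxs.ne',
    mul_rpow hxs.le (Gamma_pos_of_pos hxs).le] at h
  rwa [mul_comm ((x + s) ^ _), ← mul_assoc, ← rpow_add (Gamma_pos_of_pos hxs), add_sub_cancel,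
    rpow_one] at h

lemma tendsto_Gamma_div_Gamma_add_atTop {μ : ℝ} (hμ : 0 < μ) :
    Tendsto (fun y => Gamma y / Gamma (y + μ)) atTop (𝓝 0) := by
  set s := min μ (1 / 2)
  have hs0 : 0 < s := lt_min hμ one_half_pos
  have hs1 : s < 1 := (min_le_right _ _).trans_lt (by norm_num)
  -- Monotonicity of `Γ` on `[2, ∞)` reduces the shift `μ` to `s < 1`, where Gautschi's
  -- inequality applies: `Γ y / Γ (y + μ) ≤ Γ y / Γ (y + s) ≤ (y + s)^(1-s) / y`.
  have hbound : ∀ y, 2 ≤ y → Gamma y / Gamma (y + μ) ≤ (y + s) ^ (-s) * ((y + s) / y) := by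
    intro y hy
    have hys : 0 < y + s := by linarith
    have hmono : Gamma (y + s) ≤ Gamma (y + μ) :=
      Gamma_strictMonoOn_Ici.monotoneOn (by simp; linarith) (by simp; linarith)
        (by simp [s])
    have hgautschi := Gamma_add_one_le_Gamma_add_mul_rpow (by linarith : 0 < y) hs0 hs1
    rw [Gamma_add_one (by linarith)] at hgautschi
    rw [show -s = 1 - s - 1 by ring, rpow_sub_one hys.ne', div_mul_div_cancel₀ hys.ne',
      div_le_div_iff₀ (Gamma_pos_of_pos (by linarith)) (by linarith)]
    calc Gamma y * y = y * Gamma y := mul_comm _ _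
      _ ≤ Gamma (y + s) * (y + s) ^ (1 - s) := hgautschi
      _ ≤ (y + s) ^ (1 - s) * Gamma (y + μ) := by
        rw [mul_comm]; gcongr
  have hlim : Tendsto (fun y => (y + s) ^ (-s) * ((y + s) / y)) atTop (𝓝 (0 * 1)) := by
    refine ((tendsto_rpow_neg_atTop hs0).comp
      (tendsto_atTop_add_const_right _ s tendsto_id)).mul ?_
    have : Tendsto (fun y : ℝ => 1 + s * y⁻¹) atTop (𝓝 (1 + s * 0)) :=
      tendsto_const_nhds.add (tendsto_inv_atTop_zero.const_mul s)
    rw [mul_zero, add_zero] at this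
    refine this.congr' ?_
    filter_upwards [eventually_gt_atTop 0] with y hy
    field_simp
  refine tendsto_of_tendsto_of_tendsto_of_le_of_le' tendsto_const_nhds (by simpa using hlim) ?_ ?_
  · filter_upwards [eventually_ge_atTop 2] with y hy
    exact div_nonneg (Gamma_pos_of_pos (by linarith)).le (Gamma_pos_of_pos (by linarith)).le
  · filter_upwards [eventually_ge_atTop 2] with y hy using hbound y hy

end Real

lemma summable_mlE {μ : ℝ} (hμ : 0 < μ) (b x : ℝ) :
    Summable fun n : ℕ => x ^ n / Real.Gamma (μ * n + b) := by
  rcases eq_or_ne x 0 with rfl | hx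
  · refine summable_of_ne_finset_zero (s := {0}) fun n hn => ?_
    rw [Finset.mem_singleton] at hn
    rw [zero_pow hn, zero_div]
  have harg : Tendsto (fun n : ℕ => μ * n + b) atTop atTop :=
    tendsto_atTop_add_const_right _ b (tendsto_natCast_atTop_atTop.const_mul_atTop hμ)
  have hpos : ∀ᶠ n : ℕ in atTop, 0 < Real.Gamma (μ * n + b) :=
    (harg.eventually_gt_atTop 0).mono fun n hn => Real.Gamma_pos_of_pos hn
  refine summable_of_ratio_test_tendsto_lt_one zero_lt_one
    (hpos.mono fun n hn => div_ne_zero (pow_ne_zero n hx) hn.ne') ?_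
  have hlim := ((Real.tendsto_Gamma_div_Gamma_add_atTop hμ).comp harg).const_mul ‖x‖
  rw [mul_zero] at hlim
  refine hlim.congr' ?_
  filter_upwards [hpos, harg.eventually_gt_atTop (-μ)] with n hn hn'
  have hsucc : μ * (n + 1 : ℕ) + b = μ * n + b + μ := by push_cast; ring
  have hpos' : 0 < Real.Gamma (μ * n + b + μ) := Real.Gamma_pos_of_pos (by linarith)
  simp only [Function.comp_apply, hsucc, norm_div, norm_pow, Real.norm_of_nonneg hn.le,
    Real.norm_of_nonneg hpos'.le]
  field_simp
  ring

lemma continuous_mlE {μ : ℝ} (hμ : 0 < μ) (b : ℝ) : Continuous (mlE μ b) := by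
  refine continuous_iff_continuousAt.2 fun x => ?_
  have hR : ContinuousOn (mlE μ b) (Metric.ball 0 (|x| + 1)) := by
    refine continuousOn_tsum (fun n => (continuous_pow n).continuousOn.div_const _)
      (summable_mlE hμ b (|x| + 1)).norm fun n y hy => ?_
    rw [mem_ball_zero_iff, Real.norm_eq_abs] at hy
    simp only [norm_div, norm_pow, Real.norm_eq_abs, abs_of_pos (by positivity : 0 < |x| + 1)]
    gcongr
  exact hR.continuousAt (Metric.isOpen_ball.mem_nhds (by simp))

lemma mlE_zero (μ b : ℝ) : mlE μ b 0 = (Real.Gamma b)⁻¹ := by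
  rw [mlE, tsum_eq_single 0 fun n hn => by rw [zero_pow hn, zero_div]]
  simp

lemma mlE_eq_inv_Gamma_add_mul {μ : ℝ} (hμ : 0 < μ) (b x : ℝ) :
    mlE μ b x = (Real.Gamma b)⁻¹ + x * mlE μ (b + μ) x := by
  rw [mlE, (summable_mlE hμ b x).tsum_eq_zero_add, mlE, ← tsum_mul_left]
  congr 1
  · simp
  · congr 1 with n
    rw [pow_succ']; push_cast; ring_nf

lemma integral_rpow_mul_one_sub_rpow {a c : ℝ} (ha : 0 < a) (hc : 0 < c) :
    ∫ x in (0 : ℝ)..1, x ^ (a - 1) * (1 - x) ^ (c - 1)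
      = Real.Gamma a * Real.Gamma c / Real.Gamma (a + c) := by
  apply Complex.ofReal_injective
  have hbeta := Complex.betaIntegral_eq_Gamma_mul_div a c (by simpa) (by simpa)
  rw [Complex.betaIntegral, ← Complex.ofReal_add, Complex.Gamma_ofReal, Complex.Gamma_ofReal,
    Complex.Gamma_ofReal] at hbeta
  push_cast
  rw [← hbeta, ← intervalIntegral.integral_ofReal]
  refine intervalIntegral.integral_congr fun x hx => ?_
  rw [uIcc_of_le zero_le_one] at hx
  push_cast
  rw [Complex.ofReal_cpow hx.1, Complex.ofReal_cpow (by linarith [hx.2])]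
  push_cast
  ring

lemma integral_sub_rpow_mul_sub_rpow {a c t T : ℝ} (ha : 0 < a) (hc : 0 < c) (htT : t < T) :
    ∫ τ in t..T, (τ - t) ^ (a - 1) * (T - τ) ^ (c - 1)
      = (T - t) ^ (a + c - 1) * (Real.Gamma a * Real.Gamma c / Real.Gamma (a + c)) := by
  have hTt : 0 < T - t := sub_pos.2 htT
  have hsub := intervalIntegral.integral_comp_mul_add
    (fun τ => (τ - t) ^ (a - 1) * (T - τ) ^ (c - 1)) hTt.ne' t (a := 0) (b := 1)
  rw [mul_zero, zero_add, mul_one, sub_add_cancel, smul_eq_mul, eq_inv_mul_iff_mul_eq₀ hTt.ne']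
    at hsub
  rw [← hsub, ← integral_rpow_mul_one_sub_rpow ha hc, ← intervalIntegral.integral_const_mul,
    ← intervalIntegral.integral_const_mul]
  refine intervalIntegral.integral_congr fun x hx => ?_
  rw [uIcc_of_le zero_le_one] at hx
  rw [show (T - t) * x + t - t = (T - t) * x by ring,
    show T - ((T - t) * x + t) = (T - t) * (1 - x) by ring, Real.mul_rpow hTt.le hx.1,
    Real.mul_rpow hTt.le (by linarith [hx.2]),
    show a + c - 1 = 1 + (a - 1) + (c - 1) by ring, Real.rpow_add hTt, Real.rpow_add hTt,
    Real.rpow_one]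
  ring

lemma intervalIntegrable_sub_rpow_mul_sub_rpow {a c t T : ℝ} (ha : 0 < a) (hc : 0 < c)
    (htT : t < T) :
    IntervalIntegrable (fun τ => (τ - t) ^ (a - 1) * (T - τ) ^ (c - 1)) volume t T := by
  refine intervalIntegral.intervalIntegrable_of_integral_ne_zero ?_
  rw [integral_sub_rpow_mul_sub_rpow ha hc htT]
  have := Real.Gamma_pos_of_pos ha
  have := Real.Gamma_pos_of_pos hc
  have := Real.Gamma_pos_of_pos (add_pos ha hc)
  have := Real.rpow_pos_of_pos (sub_pos.2 htT) (a + c - 1)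
  positivity

section RiemannLiouville

variable {a t T : ℝ} {u w : ℝ → ℝ}

lemma rlIR_congr (htT : t < T) (h : EqOn u w (Iio T)) : rlIR a T u t = rlIR a T w t := by
  unfold rlIR
  split_ifs
  · exact h htT
  rw [intervalIntegral.integral_of_le htT.le, intervalIntegral.integral_of_le htT.le,
    integral_Ioc_eq_integral_Ioo, integral_Ioc_eq_integral_Ioo,
    setIntegral_congr_fun measurableSet_Ioo fun τ hτ => by rw [h hτ.2]]

lemma rlIR_const_mul (r : ℝ) : rlIR a T (fun s => r * u s) t = r * rlIR a T u t := by
  unfold rlIR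
  split_ifs
  · rfl
  simp_rw [mul_left_comm _ r, intervalIntegral.integral_const_mul]
  ring

end RiemannLiouville

noncomputable def mlKernel (μ β c T s : ℝ) : ℝ :=
  (T - s) ^ (β - 1) * mlE μ β (c * (T - s) ^ μ)

section Kernel

variable {μ β a c s t T : ℝ}

lemma mlKernel_eq_tsum (hsT : s < T) :
    mlKernel μ β c T s = ∑' n : ℕ, c ^ n / Real.Gamma (μ * n + β) * (T - s) ^ (μ * n + β - 1) := by
  have hTs : 0 < T - s := sub_pos.2 hsT
  rw [mlKernel, mlE, ← tsum_mul_left]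
  congr 1 with n
  rw [mul_pow, ← Real.rpow_mul_natCast hTs.le, show μ * n + β - 1 = β - 1 + μ * n by ring,
    Real.rpow_add hTs]
  ring

lemma integral_rpow_mul_mlKernel_term (hμ : 0 ≤ μ) (ha : 0 < a) (hβ : 0 < β) (htT : t < T)
    (n : ℕ) :
    ∫ τ in t..T, c ^ n / Real.Gamma (μ * n + β) * ((τ - t) ^ (a - 1) * (T - τ) ^ (μ * n + β - 1))
      = Real.Gamma a * (T - t) ^ (a + β - 1) *
          ((c * (T - t) ^ μ) ^ n / Real.Gamma (μ * n + (a + β))) := by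
  have hTt : 0 < T - t := sub_pos.2 htT
  have hn : 0 < μ * n + β := by positivity
  rw [intervalIntegral.integral_const_mul, integral_sub_rpow_mul_sub_rpow ha hn htT,
    show a + (μ * n + β) = μ * n + (a + β) by ring,
    show μ * n + (a + β) - 1 = a + β - 1 + μ * n by ring, Real.rpow_add hTt,
    Real.rpow_mul_natCast hTt.le, mul_pow]
  have := (Real.Gamma_pos_of_pos hn).ne'
  field_simp

lemma integral_rpow_mul_mlKernel (hμ : 0 < μ) (ha : 0 < a) (hβ : 0 < β) (htT : t < T) :
    ∫ τ in t..T, (τ - t) ^ (a - 1) * mlKernel μ β c T τ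
      = Real.Gamma a * mlKernel μ (a + β) c T t := by
  set F : ℝ → ℕ → ℝ → ℝ := fun x n τ =>
    x ^ n / Real.Gamma (μ * n + β) * ((τ - t) ^ (a - 1) * (T - τ) ^ (μ * n + β - 1))
  have hF : ∀ x n, ∫ τ in Ioo t T, F x n τ = Real.Gamma a * (T - t) ^ (a + β - 1) *
      ((x * (T - t) ^ μ) ^ n / Real.Gamma (μ * n + (a + β))) := fun x n => by
    rw [← integral_Ioc_eq_integral_Ioo, ← intervalIntegral.integral_of_le htT.le,
      integral_rpow_mul_mlKernel_term hμ.le ha hβ htT]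
  have hint : ∀ n, Integrable (F c n) (volume.restrict (Ioo t T)) := fun n =>
    (((intervalIntegrable_sub_rpow_mul_sub_rpow ha (by positivity) htT).const_mul _).1).mono_set
      Ioo_subset_Ioc_self
  have hnorm : ∀ n, ∫ τ in Ioo t T, ‖F c n τ‖ = ∫ τ in Ioo t T, F |c| n τ := fun n =>
    setIntegral_congr_fun measurableSet_Ioo fun τ hτ => by
      have := (Real.Gamma_pos_of_pos (by positivity : 0 < μ * n + β)).le
      have := Real.rpow_nonneg (sub_pos.2 hτ.1).le (a - 1)
      have := Real.rpow_nonneg (sub_pos.2 hτ.2).le (μ * n + β - 1)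
      simp only [F, norm_mul, norm_div, norm_pow, Real.norm_eq_abs, abs_of_nonneg, *]
  have hsum : Summable fun n => ∫ τ in Ioo t T, ‖F c n τ‖ := by
    simp only [hnorm, hF]
    exact (summable_mlE hμ _ _).mul_left _
  have hexpand : ∀ τ ∈ Ioo t T, (τ - t) ^ (a - 1) * mlKernel μ β c T τ = ∑' n, F c n τ :=
    fun τ hτ => by
      rw [mlKernel_eq_tsum hτ.2, ← tsum_mul_left]
      exact tsum_congr fun n => mul_left_comm _ _ _
  rw [intervalIntegral.integral_of_le htT.le, integral_Ioc_eq_integral_Ioo,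
    setIntegral_congr_fun measurableSet_Ioo hexpand,
    ← integral_tsum_of_summable_integral_norm hint hsum]
  simp only [hF, tsum_mul_left, mlKernel, mlE, mul_assoc]

lemma continuous_mlE_mul_sub_rpow (hμ : 0 < μ) (β c T : ℝ) :
    Continuous fun s => mlE μ β (c * (T - s) ^ μ) :=
  (continuous_mlE hμ β).comp
    (continuous_const.mul ((Real.continuous_rpow_const hμ.le).comp (continuous_sub_left T)))

lemma mlKernel_one (μ c T s : ℝ) : mlKernel μ 1 c T s = mlE μ 1 (c * (T - s) ^ μ) := by
  rw [mlKernel, sub_self, Real.rpow_zero, one_mul]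

lemma continuousOn_mlKernel (hμ : 0 < μ) : ContinuousOn (mlKernel μ β c T) (Iio T) :=
  ((continuous_sub_left T).continuousOn.rpow_const fun _ hs => .inl (sub_ne_zero.2 hs.ne')).mul
    (continuous_mlE_mul_sub_rpow hμ β c T).continuousOn

lemma intervalIntegrable_mlKernel (hμ : 0 < μ) (hβ : 0 < β) (s : ℝ) :
    IntervalIntegrable (mlKernel μ β c T) volume s T := by
  refine .mul_continuousOn ?_ (continuous_mlE_mul_sub_rpow hμ β c T).continuousOn
  simpa using (intervalIntegral.intervalIntegrable_rpow' (a := T - s) (b := T - T)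
    (by linarith : -1 < β - 1)).comp_sub_left T

lemma rlIR_mlKernel (hμ : 0 < μ) (ha : 0 ≤ a) (hβ : 0 < β) (htT : t < T) :
    rlIR a T (mlKernel μ β c T) t = mlKernel μ (a + β) c T t := by
  rcases ha.eq_or_lt with rfl | ha
  · simp [rlIR]
  rw [rlIR, if_neg ha.ne', integral_rpow_mul_mlKernel hμ ha hβ htT,
    inv_mul_cancel_left₀ (Real.Gamma_pos_of_pos ha).ne']

lemma mlKernel_one_eq_one_add_integral (hμ : 0 < μ) (hsT : s < T) :
    mlKernel μ 1 c T s = 1 + c * ∫ τ in s..T, mlKernel μ μ c T τ := by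
  have h := integral_rpow_mul_mlKernel (c := c) hμ one_pos hμ hsT
  simp only [sub_self, Real.rpow_zero, one_mul, Real.Gamma_one] at h
  rw [h, mlKernel_one, mlE_eq_inv_Gamma_add_mul hμ, Real.Gamma_one, inv_one, mlKernel,
    add_sub_cancel_left]
  ring

lemma hasDerivAt_mlKernel_one (hμ : 0 < μ) (hsT : s < T) :
    HasDerivAt (mlKernel μ 1 c T) (-c * mlKernel μ μ c T s) s := by
  have hcont := continuousOn_mlKernel (β := μ) (c := c) (T := T) hμ
  have hint := intervalIntegral.integral_hasDerivAt_left
    (intervalIntegrable_mlKernel hμ hμ s) (hcont.stronglyMeasurableAtFilter isOpen_Iio s hsT)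
    (hcont.continuousAt (Iio_mem_nhds hsT))
  refine ((hint.const_mul c).const_add 1).congr_of_eventuallyEq ?_ |>.congr_deriv (by ring)
  filter_upwards [Iio_mem_nhds hsT] with u hu using mlKernel_one_eq_one_add_integral hμ hu

end Kernel

theorem hilferDR_mlE_general (μ ν l T : ℝ) (hν0 : 0 ≤ ν) (hν1 : ν ≤ 1) (hμ0 : 0 < μ) (hμ1 : μ < 1) :
    (∀ t : ℝ, 0 ≤ t → t < T →
      rlIR (ν * (1 - μ)) T
        (fun s => (T - s) ^ (-(ν * (1 - μ))) * mlE μ (1 - ν * (1 - μ)) (-l * (T - s) ^ μ)) t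
        = mlE μ 1 (-l * (T - t) ^ μ)) ∧
    Filter.Tendsto
      (rlIR (ν * (1 - μ)) T
        (fun s => (T - s) ^ (-(ν * (1 - μ))) * mlE μ (1 - ν * (1 - μ)) (-l * (T - s) ^ μ)))
      (nhdsWithin T (Set.Iio T)) (nhds 1) ∧
    (∀ t : ℝ, 0 < t → t < T →
      hilferDR μ (1 - ν) T
        (fun s => (T - s) ^ (-(ν * (1 - μ))) * mlE μ (1 - ν * (1 - μ)) (-l * (T - s) ^ μ)) t
        = -l * ((T - t) ^ (-(ν * (1 - μ))) * mlE μ (1 - ν * (1 - μ)) (-l * (T - t) ^ μ))) := by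
  set β := 1 - ν * (1 - μ)
  have hv : (fun s => (T - s) ^ (-(ν * (1 - μ))) * mlE μ β (-l * (T - s) ^ μ))
      = mlKernel μ β (-l) T := by
    funext s
    rw [mlKernel, sub_sub_cancel_left]
  have hβ : 0 < β := by nlinarith
  have hI : ∀ t < T, rlIR (ν * (1 - μ)) T (mlKernel μ β (-l) T) t = mlKernel μ 1 (-l) T t :=
    fun t ht => by rw [rlIR_mlKernel hμ0 (by nlinarith) hβ ht, add_sub_cancel]
  have hD : EqOn (deriv (rlIR (ν * (1 - μ)) T (mlKernel μ β (-l) T)))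
      (fun s => -(-l) * mlKernel μ μ (-l) T s) (Iio T) := fun s hs =>
    ((hasDerivAt_mlKernel_one hμ0 hs).congr_of_eventuallyEq
      (eventually_of_mem (Iio_mem_nhds hs) hI)).deriv
  have hcont : Continuous (mlKernel μ 1 (-l) T) := by
    simpa only [← funext (mlKernel_one μ (-l) T)] using
      continuous_mlE_mul_sub_rpow hμ0 1 (-l) T
  rw [hv]
  refine ⟨fun t _ ht => by rw [hI t ht, mlKernel_one], ?_, fun t _ ht => ?_⟩
  · have hval : mlKernel μ 1 (-l) T T = 1 := by
      rw [mlKernel_one, sub_self, Real.zero_rpow hμ0.ne', mul_zero, mlE_zero, Real.Gamma_one,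
        inv_one]
    refine (hval ▸ hcont.continuousWithinAt.tendsto).congr' ?_
    filter_upwards [self_mem_nhdsWithin] with t ht using (hI t ht).symm
  · rw [hilferDR, sub_sub_cancel, rlIR_congr ht hD, rlIR_const_mul,
      rlIR_mlKernel hμ0 (by nlinarith) hμ0 ht, show (1 - ν) * (1 - μ) + μ = β by ring,
      mlKernel, sub_sub_cancel_left]
    ring

/-- Let `0 ≤ ν ≤ 1`, `0 < μ < 1`, `λ > 0`, `T > 0` and
`v(t) := (T-t)^{-ν(1-μ)} E_{μ,1-ν(1-μ)}(-λ (T-t)^μ)` for `0 < t < T`. Then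
(i) `I_{t,T}^{ν(1-μ)} v(t) = E_{μ,1}(-λ (T-t)^μ)` for `0 ≤ t < T`, so
`I_{t,T}^{ν(1-μ)} v(t) → 1` as `t → T⁻`; and (ii) `D_{t,T}^{μ,1-ν} v(t) = -λ v(t)`
for `0 < t < T`. -/
theorem hilferDR_mlE (μ ν l T : ℝ) (hν0 : 0 ≤ ν) (hν1 : ν ≤ 1) (hμ0 : 0 < μ) (hμ1 : μ < 1)
    (hl : 0 < l) (hT : 0 < T) :
    (∀ t : ℝ, 0 ≤ t → t < T →
      rlIR (ν * (1 - μ)) T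
        (fun s => (T - s) ^ (-(ν * (1 - μ))) * mlE μ (1 - ν * (1 - μ)) (-l * (T - s) ^ μ)) t
        = mlE μ 1 (-l * (T - t) ^ μ)) ∧
    Filter.Tendsto
      (rlIR (ν * (1 - μ)) T
        (fun s => (T - s) ^ (-(ν * (1 - μ))) * mlE μ (1 - ν * (1 - μ)) (-l * (T - s) ^ μ)))
      (nhdsWithin T (Set.Iio T)) (nhds 1) ∧
    (∀ t : ℝ, 0 < t → t < T →
      hilferDR μ (1 - ν) T
        (fun s => (T - s) ^ (-(ν * (1 - μ))) * mlE μ (1 - ν * (1 - μ)) (-l * (T - s) ^ μ)) t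
        = -l * ((T - t) ^ (-(ν * (1 - μ))) * mlE μ (1 - ν * (1 - μ)) (-l * (T - t) ^ μ))) :=
  hilferDR_mlE_general μ ν l T hν0 hν1 hμ0 hμ1
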